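/- arXiv:2105.07705 — 4 statements merged into one kernel-verified Lean document; each statement's English description precedes it below -/
import Mathlib

section
/- Let r ≥ 1 and f, g ∈ M_r(ℂ)[Z] be matrix polynomials. Define P_f(x, y₁) = det(y₁ I − f(xI)) ∈ ℂ[x, y₁], P_g(x, y₂) = det(y₂ I − g(xI)) ∈ ℂ[x, y₂], and R_{f,g}(y₁, y₂) = Res_x(P_f(x, y₁), P_g(x, y₂)) ∈ ℂ[y₁, y₂], the resultant with respect to x. If every eigenvalue of f(xI) and every eigenvalue of g(xI), as elements of an algebraic closure of ℂ(x), are multiplicatively independent, then R_{f,g}(y₁, y₂) has no factor of the form y₁^i y₂^j − ρ or y₁^i − ρ y₂^j for nonnegative integers i, j not both zero and a root of unity ρ. -/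
open Polynomial Matrix

/-- The Sylvester matrix of two polynomials `p, q` over a commutative ring: an
`(n + m) × (n + m)` matrix, where `m = deg p` and `n = deg q`, whose first `n` rows are
the shifted coefficient sequences of `p` and whose last `m` rows are the shifted
coefficient sequences of `q`. -/
noncomputable def sylvester {R : Type*} [CommRing R] (p q : Polynomial R) :
    Matrix (Fin (q.natDegree + p.natDegree)) (Fin (q.natDegree + p.natDegree)) R :=
  Matrix.of fun i j =>
    if (i : ℕ) < q.natDegree then
      (if (j : ℕ) ≤ (i : ℕ) + p.natDegree then p.coeff (p.natDegree + i - j) else 0)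
    else
      (if (j : ℕ) ≤ ((i : ℕ) - q.natDegree) + q.natDegree then
        q.coeff (q.natDegree + ((i : ℕ) - q.natDegree) - j) else 0)

/-- The resultant of two polynomials: the determinant of their Sylvester matrix. -/
noncomputable def resultant {R : Type*} [CommRing R] (p q : Polynomial R) : R :=
  (_root_.sylvester p q).det

/-- `P_f(x, y₁) = det(y₁ I − f(xI))`, regarded as a polynomial in `x` whose coefficients
are polynomials in the variables `y₁ = X 0`, `y₂ = X 1`. -/
noncomputable def Pmat {r : ℕ} (f : Polynomial (Matrix (Fin r) (Fin r) ℂ)) (v : Fin 2) :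
    Polynomial (MvPolynomial (Fin 2) ℂ) :=
  (Polynomial.C (MvPolynomial.X v : MvPolynomial (Fin 2) ℂ) •
      (1 : Matrix (Fin r) (Fin r) (Polynomial (MvPolynomial (Fin 2) ℂ))) -
    (matPolyEquiv.symm f).map (Polynomial.map (MvPolynomial.C))).det

/-- `R_{f,g}(y₁, y₂) = Res_x(P_f(x, y₁), P_g(x, y₂)) ∈ ℂ[y₁, y₂]`. -/
noncomputable def Rres {r : ℕ} (f g : Polynomial (Matrix (Fin r) (Fin r) ℂ)) :
    MvPolynomial (Fin 2) ℂ :=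
  _root_.resultant (Pmat f 0) (Pmat g 1)

/-- `T_{f,g}(y₁, y₂) = Res_x(P_f(x, y₁), y₂ − det(g(xI))) ∈ ℂ[y₁, y₂]`. -/
noncomputable def Tres {r : ℕ} (f g : Polynomial (Matrix (Fin r) (Fin r) ℂ)) :
    MvPolynomial (Fin 2) ℂ :=
  _root_.resultant (Pmat f 0)
    (Polynomial.C (MvPolynomial.X 1 : MvPolynomial (Fin 2) ℂ) -
      ((matPolyEquiv.symm g).det).map (MvPolynomial.C))

/-- The natural map from `ℂ[x]` into an algebraic closure of `ℂ(x)`. -/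
noncomputable def toClosure : Polynomial ℂ →+* AlgebraicClosure (RatFunc ℂ) :=
  (algebraMap (RatFunc ℂ) (AlgebraicClosure (RatFunc ℂ))).comp
    (algebraMap (Polynomial ℂ) (RatFunc ℂ))

/-!
If one of the binomials `F` divides `R_{f,g}`, pick a point `(α, β)` of the curve `F = 0` in `Ω`,
the algebraic closure of `ℂ(x)`, one of whose coordinates is `x` itself. Specializing the resultant there,
`P_f(·, α)` and `P_g(·, β)` have a common root `x₀`: as one of `α, β` is transcendental over `ℂ`,
the specialization keeps the degree of that polynomial. For the same reason `x₀` is transcendental,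
so `x ↦ x₀` extends to an embedding `Φ : Ω → Ω` over `ℂ`, and `α, β` are the `Φ`-images of
eigenvalues `μ, η` of `f(xI), g(xI)`. Hence `μ^a η^b = ρ` with `(a, b) = (i, ±j)`, and raising this
to the order of `ρ` contradicts the multiplicative independence of `μ` and `η`.
-/

open Polynomial.Bivariate

theorem sylvester_eq_transpose_submatrix {R : Type*} [CommRing R] (p q : Polynomial R) :
    Polynomial.sylvester p q p.natDegree q.natDegree =
      ((_root_.sylvester p q).submatrix (Fin.revPerm.trans (finCongr (add_comm _ _)))
        (Fin.revPerm.trans (finCongr (add_comm _ _))))ᵀ := by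
  ext i j
  have hi := i.isLt
  induction j using Fin.addCases <;>
  · rename_i j
    have hj := j.isLt
    simp only [Polynomial.sylvester, _root_.sylvester, Set.mem_Icc, Matrix.of_apply,
      Fin.addCases_left, Fin.addCases_right, Matrix.transpose_apply, Matrix.submatrix_apply,
      Equiv.trans_apply, Fin.revPerm_apply, finCongr_apply, Fin.val_cast, Fin.val_rev,
      Fin.val_castAdd, Fin.val_natAdd]
    split_ifs <;> first
      | omega
      | rfl
      | (congr 1; omega)
      | exact (coeff_eq_zero_of_natDegree_lt (by omega)).symm

theorem resultant_eq_polynomial_resultant {R : Type*} [CommRing R] (p q : Polynomial R) :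
    _root_.resultant p q = Polynomial.resultant p q := by
  rw [_root_.resultant, Polynomial.resultant, sylvester_eq_transpose_submatrix,
    Matrix.det_transpose, Matrix.det_submatrix_equiv_self]

theorem exists_isRoot_isRoot_of_resultant_eq_zero {K : Type*} [Field K] [IsAlgClosed K]
    {p q : K[X]} {m : ℕ} (hp : p.natDegree ≤ m) (hq : q ≠ 0)
    (h : p.resultant q m q.natDegree = 0) : ∃ x, p.IsRoot x ∧ q.IsRoot x := by
  obtain ⟨k, rfl⟩ := Nat.exists_eq_add_of_le hp
  rw [resultant_add_left_deg _ _ _ _ _ le_rfl, ← leadingCoeff] at h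
  have hres : p.resultant q = 0 := by simpa [hq] using h
  obtain ⟨x, hx⟩ := not_forall.mp
    ((resultant_eq_zero_iff.mp hres).2 ∘ (isCoprime_iff_aeval_ne_zero_of_isAlgClosed K K p q).mpr)
  simp only [not_or, not_not, coe_aeval_eq_eval] at hx
  exact ⟨x, hx.1, hx.2⟩

theorem eval_map_aeval_swap {R A : Type*} [CommRing R] [CommRing A] [Algebra R A]
    (χ : R[X][X]) (x y : A) :
    ((swap χ).map (aeval y).toRingHom).eval x = (χ.map (aeval x).toRingHom).eval y := by
  let := Polynomial.algebra (R := R) (A := A)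
  change eval x (mapAlgHom _ _) = _
  rw [← aveal_eq_map_swap, aeval_def, ← coe_evalRingHom, hom_eval₂, eval_map]
  congr 1
  · ext <;> simp
  · simp

theorem transcendental_of_isRoot_map_aeval {k L : Type*} [Field k] [Field L] [Algebra k L]
    {χ : k[X][X]} (hχ : χ.Monic) {x y : L} (hy : Transcendental k y)
    (h : (χ.map (aeval x).toRingHom).IsRoot y) : Transcendental k x := by
  intro hx
  let A := Algebra.adjoin k {x}
  have : Algebra.IsAlgebraic k A :=
    (Subalgebra.isAlgebraic_iff _).mp (Algebra.isAlgebraic_adjoin_singleton_iff.mpr hx)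
  let x' : A := ⟨x, Algebra.subset_adjoin rfl⟩
  refine hy.extendScalars A ⟨χ.map (aeval x').toRingHom, (hχ.map _).ne_zero, ?_⟩
  have hx' : (algebraMap A L).comp (aeval x').toRingHom = (aeval (R := k) x).toRingHom := by
    ext <;> simp [x']
  rwa [aeval_def, eval₂_eq_eval_map, Polynomial.map_map, hx']

theorem exists_algHom_comp_algebraMap_eq {k F K M : Type*} [CommRing k] [Field F] [Field K]
    [Field M] [IsAlgClosed M] [Algebra k F] [Algebra k K] [Algebra k M] [Algebra F K]
    [IsScalarTower k F K] [Algebra.IsAlgebraic F K] (φ : F →ₐ[k] M) :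
    ∃ Φ : K →ₐ[k] M, ∀ x, Φ (algebraMap F K x) = φ x := by
  let := φ.toRingHom.toAlgebra
  have : IsScalarTower k F M := .of_algebraMap_eq fun c ↦ (φ.commutes c).symm
  exact ⟨(IsAlgClosed.lift : K →ₐ[F] M).restrictScalars k, IsAlgClosed.lift.commutes⟩

theorem exists_isRoot_eq_of_isRoot_map {K L : Type*} [Field K] [IsAlgClosed K] [Field L]
    (Φ : K →+* L) {χ : K[X]} (hχ : χ ≠ 0) {z : L} (hz : (χ.map Φ).IsRoot z) :
    ∃ w, χ.IsRoot w ∧ Φ w = z := by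
  obtain ⟨w, rfl⟩ := (IsAlgClosed.splits χ).mem_range_of_isRoot hχ hz
  rw [IsRoot, eval_map, eval₂_at_apply, map_eq_zero] at hz
  exact ⟨w, hz, rfl⟩

theorem exists_zpow_eq {K : Type*} [Field K] [IsAlgClosed K] {n : ℤ} (hn : n ≠ 0) (c : K) :
    ∃ z, z ^ n = c := by
  obtain ⟨z, hz⟩ := IsAlgClosed.exists_pow_nat_eq c (Int.natAbs_pos.mpr hn)
  rcases Int.natAbs_eq n with h | h
  · exact ⟨z, by rw [h, zpow_natCast, hz]⟩
  · exact ⟨z⁻¹, by rw [h, _root_.inv_zpow', neg_neg, zpow_natCast, hz]⟩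

theorem exists_zpow_mul_zpow_eq {K : Type*} [Field K] [IsAlgClosed K] {t c : K} (ht : t ≠ 0)
    (hc : c ≠ 0) {a b : ℤ} (hab : (a, b) ≠ (0, 0)) :
    ∃ α β : K, α ≠ 0 ∧ β ≠ 0 ∧ (α = t ∨ β = t) ∧ α ^ a * β ^ b = c := by
  by_cases hb : b = 0
  · obtain ⟨α, hα⟩ := exists_zpow_eq (by simpa [hb] using hab) c
    refine ⟨α, t, ?_, ht, .inr rfl, by rw [hb, zpow_zero, mul_one, hα]⟩
    rintro rfl
    exact hc (by rw [← hα, _root_.zero_zpow _ (by simpa [hb] using hab)])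
  · obtain ⟨β, hβ⟩ := exists_zpow_eq hb (c * (t ^ a)⁻¹)
    refine ⟨t, β, ht, ?_, .inl rfl, by rw [hβ, mul_comm c, ← mul_assoc,
      mul_inv_cancel₀ (zpow_ne_zero a ht), one_mul]⟩
    rintro rfl
    rw [_root_.zero_zpow _ hb] at hβ
    exact mul_ne_zero hc (inv_ne_zero (zpow_ne_zero a ht)) hβ.symm

theorem det_smul_one_sub_eq_eval_charpoly {R n : Type*} [CommRing R] [Fintype n] [DecidableEq n]
    (M : Matrix n n R) (μ : R) : (μ • (1 : Matrix n n R) - M).det = M.charpoly.eval μ := by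
  rw [eval_charpoly, smul_one_eq_diagonal, scalar_apply]

theorem Pmat_eq_map_swap_charpoly {r : ℕ} (f : Polynomial (Matrix (Fin r) (Fin r) ℂ))
    (v : Fin 2) :
    Pmat f v = (swap (matPolyEquiv.symm f).charpoly).map
      (aeval (R := ℂ) (MvPolynomial.X v)).toRingHom := by
  let := Polynomial.algebra (R := ℂ) (A := MvPolynomial (Fin 2) ℂ)
  change _ = mapAlgHom _ _
  rw [← aveal_eq_map_swap, Matrix.charpoly, aeval_def, ← coe_eval₂RingHom, RingHom.map_det, Pmat]
  congr 1
  ext i j : 1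
  by_cases hij : i = j <;> simp [one_apply, hij]

section Specialization

variable {r : ℕ} (f : Polynomial (Matrix (Fin r) (Fin r) ℂ)) (v : Fin 2) {A : Type*} [CommRing A]
  [Algebra ℂ A] (ψ : MvPolynomial (Fin 2) ℂ →ₐ[ℂ] A)

theorem Pmat_map_eq :
    (Pmat f v).map ψ.toRingHom =
      (swap (matPolyEquiv.symm f).charpoly).map (aeval (ψ (MvPolynomial.X v))).toRingHom := by
  rw [Pmat_eq_map_swap_charpoly, Polynomial.map_map, aeval_algHom]
  rfl

theorem isRoot_Pmat_map_iff (x : A) :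
    ((Pmat f v).map ψ.toRingHom).IsRoot x ↔
      ((matPolyEquiv.symm f).charpoly.map (aeval x).toRingHom).IsRoot (ψ (MvPolynomial.X v)) := by
  rw [Pmat_map_eq, IsRoot, IsRoot, eval_map_aeval_swap]

variable {f v ψ}

theorem natDegree_Pmat_map (hψ : Transcendental ℂ (ψ (MvPolynomial.X v))) :
    ((Pmat f v).map ψ.toRingHom).natDegree = (Pmat f v).natDegree := by
  rw [Pmat_map_eq, Pmat_eq_map_swap_charpoly,
    natDegree_map_eq_of_injective (transcendental_iff_injective.mp hψ),
    natDegree_map_eq_of_injective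
      (transcendental_iff_injective.mp (MvPolynomial.transcendental_X ℂ v))]

theorem Pmat_map_ne_zero (hψ : Transcendental ℂ (ψ (MvPolynomial.X v))) :
    (Pmat f v).map ψ.toRingHom ≠ 0 := by
  rw [Pmat_map_eq, Ne, Polynomial.map_eq_zero_iff (transcendental_iff_injective.mp hψ),
    EmbeddingLike.map_eq_zero_iff]
  exact (charpoly_monic _).ne_zero

end Specialization

local notation "Ω" => AlgebraicClosure (RatFunc ℂ)

theorem aeval_toClosure_X (p : ℂ[X]) : aeval (toClosure X) p = toClosure p := by
  have h : toClosure = algebraMap ℂ[X] Ω := (IsScalarTower.algebraMap_eq _ (RatFunc ℂ) _).symm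
  rw [h, aeval_algebraMap_apply, aeval_X_left_apply]

theorem transcendental_toClosure_X : Transcendental ℂ (toClosure X) := by
  rw [transcendental_iff_injective]
  intro p q hpq
  simp only [aeval_toClosure_X] at hpq
  exact IsFractionRing.injective ℂ[X] (RatFunc ℂ) ((algebraMap (RatFunc ℂ) Ω).injective hpq)

theorem exists_algHom_toClosure_eq_aeval {x₀ : Ω} (hx₀ : Transcendental ℂ x₀) :
    ∃ Φ : Ω →ₐ[ℂ] Ω, ∀ p, Φ (toClosure p) = aeval x₀ p := by
  have hinj := transcendental_iff_injective.mp hx₀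
  obtain ⟨Φ, hΦ⟩ := exists_algHom_comp_algebraMap_eq (F := RatFunc ℂ) (K := Ω)
    (IsFractionRing.liftAlgHom (K := RatFunc ℂ) hinj)
  exact ⟨Φ, fun p ↦ (hΦ _).trans (IsFractionRing.lift_algebraMap hinj p)⟩

section Eigenvalues

variable {r : ℕ} (f g : Polynomial (Matrix (Fin r) (Fin r) ℂ))

theorem exists_isRoot_charpoly_of_aeval_Rres_eq_zero {α β : Ω}
    (hR : MvPolynomial.aeval ![α, β] (Rres f g) = 0)
    (htr : Transcendental ℂ α ∨ Transcendental ℂ β) :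
    ∃ x₀ : Ω, ((matPolyEquiv.symm f).charpoly.map (aeval x₀).toRingHom).IsRoot α ∧
      ((matPolyEquiv.symm g).charpoly.map (aeval x₀).toRingHom).IsRoot β := by
  set ψ := MvPolynomial.aeval (R := ℂ) ![α, β]
  have hres : ((Pmat f 0).map ψ.toRingHom).resultant ((Pmat g 1).map ψ.toRingHom)
      (Pmat f 0).natDegree (Pmat g 1).natDegree = 0 := by
    rwa [resultant_map_map, ← resultant_eq_polynomial_resultant]
  suffices ∃ x₀, ((Pmat f 0).map ψ.toRingHom).IsRoot x₀ ∧ ((Pmat g 1).map ψ.toRingHom).IsRoot x₀ by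
    obtain ⟨x₀, h₁, h₂⟩ := this
    rw [isRoot_Pmat_map_iff] at h₁ h₂
    exact ⟨x₀, by simpa [ψ] using h₁, by simpa [ψ] using h₂⟩
  rcases htr with hα | hβ
  · have hα' : Transcendental ℂ (ψ (MvPolynomial.X 0)) := by simpa [ψ]
    rw [resultant_comm, mul_eq_zero, or_iff_right (pow_ne_zero _ (neg_ne_zero.mpr one_ne_zero)),
      ← natDegree_Pmat_map hα'] at hres
    obtain ⟨x₀, h₂, h₁⟩ :=
      exists_isRoot_isRoot_of_resultant_eq_zero natDegree_map_le (Pmat_map_ne_zero hα') hres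
    exact ⟨x₀, h₁, h₂⟩
  · have hβ' : Transcendental ℂ (ψ (MvPolynomial.X 1)) := by simpa [ψ]
    rw [← natDegree_Pmat_map hβ'] at hres
    exact exists_isRoot_isRoot_of_resultant_eq_zero natDegree_map_le (Pmat_map_ne_zero hβ') hres

theorem exists_eigenvalues_of_aeval_Rres_eq_zero {α β : Ω}
    (hR : MvPolynomial.aeval ![α, β] (Rres f g) = 0)
    (htr : Transcendental ℂ α ∨ Transcendental ℂ β) :
    ∃ (Φ : Ω →ₐ[ℂ] Ω) (μ η : Ω), ((matPolyEquiv.symm f).charpoly.map toClosure).IsRoot μ ∧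
      ((matPolyEquiv.symm g).charpoly.map toClosure).IsRoot η ∧ Φ μ = α ∧ Φ η = β := by
  obtain ⟨x₀, hα, hβ⟩ := exists_isRoot_charpoly_of_aeval_Rres_eq_zero f g hR htr
  have hx₀ : Transcendental ℂ x₀ := htr.elim
    (transcendental_of_isRoot_map_aeval (charpoly_monic _) · hα)
    (transcendental_of_isRoot_map_aeval (charpoly_monic _) · hβ)
  obtain ⟨Φ, hΦ⟩ := exists_algHom_toClosure_eq_aeval hx₀
  have hmap (χ : ℂ[X][X]) : χ.map (aeval x₀).toRingHom = (χ.map toClosure).map Φ.toRingHom := by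
    rw [Polynomial.map_map]
    congr 1
    exact RingHom.ext fun p ↦ (hΦ p).symm
  obtain ⟨μ, hμ, rfl⟩ := exists_isRoot_eq_of_isRoot_map Φ.toRingHom
    ((charpoly_monic _).map _).ne_zero (hmap _ ▸ hα)
  obtain ⟨η, hη, rfl⟩ := exists_isRoot_eq_of_isRoot_map Φ.toRingHom
    ((charpoly_monic _).map _).ne_zero (hmap _ ▸ hβ)
  exact ⟨Φ, μ, η, hμ, hη, rfl, rfl⟩

theorem exists_eigenvalues_zpow_mul_zpow_eq {F : MvPolynomial (Fin 2) ℂ} (hF : F ∣ Rres f g)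
    {a b : ℤ} (hab : (a, b) ≠ (0, 0)) {ρ : ℂ} (hρ : ρ ≠ 0)
    (hvan : ∀ α β : Ω, α ≠ 0 → β ≠ 0 → α ^ a * β ^ b = algebraMap ℂ Ω ρ →
      MvPolynomial.aeval ![α, β] F = 0) :
    ∃ μ η : Ω, ((matPolyEquiv.symm f).charpoly.map toClosure).IsRoot μ ∧
      ((matPolyEquiv.symm g).charpoly.map toClosure).IsRoot η ∧
      μ ^ a * η ^ b = algebraMap ℂ Ω ρ := by
  have ht₀ : toClosure X ≠ 0 := fun h ↦ transcendental_toClosure_X (h ▸ isAlgebraic_zero)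
  obtain ⟨α, β, hα, hβ, ht, hαβ⟩ := exists_zpow_mul_zpow_eq (K := Ω) ht₀
    ((_root_.map_ne_zero (algebraMap ℂ Ω)).mpr hρ) hab
  have hR : MvPolynomial.aeval ![α, β] (Rres f g) = 0 :=
    zero_dvd_iff.mp (hvan α β hα hβ hαβ ▸ map_dvd _ hF)
  have htr : Transcendental ℂ α ∨ Transcendental ℂ β := by
    rcases ht with rfl | rfl
    exacts [.inl transcendental_toClosure_X, .inr transcendental_toClosure_X]
  obtain ⟨Φ, μ, η, hμ, hη, rfl, rfl⟩ := exists_eigenvalues_of_aeval_Rres_eq_zero f g hR htr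
  refine ⟨μ, η, hμ, hη, Φ.toRingHom.injective ?_⟩
  simpa [map_zpow₀] using hαβ

end Eigenvalues

theorem statement5_general (r : ℕ)
    (f g : Polynomial (Matrix (Fin r) (Fin r) ℂ))
    (hindep : ∀ μ η : AlgebraicClosure (RatFunc ℂ),
      (μ • (1 : Matrix (Fin r) (Fin r) (AlgebraicClosure (RatFunc ℂ))) -
          (matPolyEquiv.symm f).map toClosure).det = 0 →
      (η • (1 : Matrix (Fin r) (Fin r) (AlgebraicClosure (RatFunc ℂ))) -
          (matPolyEquiv.symm g).map toClosure).det = 0 →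
      ∀ k l : ℤ, (k, l) ≠ (0, 0) → μ ^ k * η ^ l ≠ 1) :
    ∀ i j : ℕ, ¬(i = 0 ∧ j = 0) → ∀ ρ : ℂ, (∃ k : ℕ, 1 ≤ k ∧ ρ ^ k = 1) →
      ¬((MvPolynomial.X 0 : MvPolynomial (Fin 2) ℂ) ^ i * MvPolynomial.X 1 ^ j -
          MvPolynomial.C ρ ∣ Rres f g) ∧
      ¬((MvPolynomial.X 0 : MvPolynomial (Fin 2) ℂ) ^ i -
          MvPolynomial.C ρ * MvPolynomial.X 1 ^ j ∣ Rres f g) := by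
  intro i j hij ρ ⟨k, hk, hρk⟩
  have hρ : ρ ≠ 0 := by rintro rfl; simp [zero_pow (by omega : k ≠ 0)] at hρk
  have no_relation {F : MvPolynomial (Fin 2) ℂ} {a b : ℤ} (hab : (a, b) ≠ (0, 0))
      (hvan : ∀ α β : Ω, α ≠ 0 → β ≠ 0 → α ^ a * β ^ b = algebraMap ℂ Ω ρ →
        MvPolynomial.aeval ![α, β] F = 0) : ¬F ∣ Rres f g := fun hF ↦ by
    obtain ⟨μ, η, hμ, hη, hrel⟩ := exists_eigenvalues_zpow_mul_zpow_eq f g hF hab hρ hvan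
    refine hindep μ η ?_ ?_ (a * k) (b * k) (by simpa [Nat.one_le_iff_ne_zero.mp hk] using hab) ?_
    · rwa [det_smul_one_sub_eq_eval_charpoly, charpoly_map]
    · rwa [det_smul_one_sub_eq_eval_charpoly, charpoly_map]
    · rw [_root_.zpow_mul, _root_.zpow_mul, ← mul_zpow, hrel, zpow_natCast, ← map_pow, hρk, map_one]
  refine ⟨no_relation (a := i) (b := j) (by simpa using hij) fun α β _ _ h ↦ ?_,
    no_relation (a := i) (b := -j) (by simpa using hij) fun α β _ hβ h ↦ ?_⟩
  · simp only [zpow_natCast] at h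
    simp [h]
  · rw [_root_.zpow_neg, zpow_natCast, zpow_natCast, mul_inv_eq_iff_eq_mul₀ (pow_ne_zero _ hβ)] at h
    simp [h]

/-- **Lemma 2.1(i).** If every eigenvalue of `f(xI)` and every eigenvalue of
`g(xI)`, as elements of an algebraic closure of `ℂ(x)`, are multiplicatively independent,
then `R_{f,g}(y₁, y₂)` has no factor of the form `y₁^i y₂^j − ρ` or `y₁^i − ρ y₂^j` with
`i, j` nonnegative integers not both zero and `ρ` a root of unity. -/
theorem statement5 (r : ℕ) (hr : 1 ≤ r)
    (f g : Polynomial (Matrix (Fin r) (Fin r) ℂ))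
    (hf : 1 ≤ f.natDegree) (hg : 1 ≤ g.natDegree)
    (hindep : ∀ μ η : AlgebraicClosure (RatFunc ℂ),
      (μ • (1 : Matrix (Fin r) (Fin r) (AlgebraicClosure (RatFunc ℂ))) -
          (matPolyEquiv.symm f).map toClosure).det = 0 →
      (η • (1 : Matrix (Fin r) (Fin r) (AlgebraicClosure (RatFunc ℂ))) -
          (matPolyEquiv.symm g).map toClosure).det = 0 →
      ∀ k l : ℤ, (k, l) ≠ (0, 0) → μ ^ k * η ^ l ≠ 1) :
    ∀ i j : ℕ, ¬(i = 0 ∧ j = 0) → ∀ ρ : ℂ, (∃ k : ℕ, 1 ≤ k ∧ ρ ^ k = 1) →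
      ¬((MvPolynomial.X 0 : MvPolynomial (Fin 2) ℂ) ^ i * MvPolynomial.X 1 ^ j -
          MvPolynomial.C ρ ∣ Rres f g) ∧
      ¬((MvPolynomial.X 0 : MvPolynomial (Fin 2) ℂ) ^ i -
          MvPolynomial.C ρ * MvPolynomial.X 1 ^ j ∣ Rres f g) :=
  statement5_general r f g hindep
end

section
/- Let r ≥ 1 and f, g ∈ M_r(ℂ)[Z] be matrix polynomials. Define P_f(x, y₁) = det(y₁ I − f(xI)), P_g(x, y₂) = det(y₂ I − g(xI)), R_{f,g}(y₁, y₂) = Res_x(P_f(x, y₁), P_g(x, y₂)) and T_{f,g}(y₁, y₂) = Res_x(P_f(x, y₁), y₂ − det(g(xI))). Then both R_{f,g} and T_{f,g} are nonzero polynomials in ℂ[y₁, y₂]. -/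
open Polynomial Matrix

/-!
The Sylvester determinant agrees up to sign with `Polynomial.resultant`, so it suffices to show
`Res_x(P_f, q) ≠ 0` after a specialisation. Send `y₁` to a complex number `c` at which the leading
coefficient of `P_f` does not vanish. Then `P_f(x, c)` has constant coefficients, so it splits over
`ℂ[y₂]` with roots `a ∈ ℂ`, and the specialised resultant is `lc^n ∏ₐ q(a, y₂)`. For `R` the factor
`q(a, y₂) = P_g(a, y₂)` is the characteristic polynomial of `g(aI)`, for `T` it is
`y₂ - det g(aI)`; both are monic in `y₂`, hence nonzero.
-/

theorem Matrix.det_submatrix_perm {n R : Type*} [Fintype n] [DecidableEq n] [CommRing R]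
    (M : Matrix n n R) (σ τ : Equiv.Perm n) :
    (M.submatrix σ τ).det = Equiv.Perm.sign σ * Equiv.Perm.sign τ * M.det := by
  rw [show M.submatrix σ τ = (M.submatrix id τ).submatrix σ id from rfl, det_permute, det_permute',
    mul_assoc]

theorem sylvester_eq_submatrix_transpose {R : Type*} [CommRing R] (p q : R[X]) :
    _root_.sylvester p q = (Polynomial.sylvester q p q.natDegree p.natDegree)ᵀ.submatrix
      (finSumFinEquiv.symm.trans ((Equiv.sumCongr Fin.revPerm Fin.revPerm).trans finSumFinEquiv))
      Fin.revPerm := by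
  ext i j
  have := j.isLt
  induction i using Fin.addCases with
  | left i | right i =>
    have := i.isLt
    simp only [_root_.sylvester, Polynomial.sylvester, of_apply, transpose_apply, submatrix_apply,
      Equiv.coe_trans, Function.comp_apply, Equiv.sumCongr_apply, Fin.revPerm_apply, Fin.val_rev,
      Set.mem_Icc, tsub_le_iff_right, ↓reduceIte, Fin.val_castAdd, Fin.is_lt, Fin.val_natAdd,
      add_lt_iff_neg_left, not_lt_zero, add_tsub_cancel_left, finSumFinEquiv_symm_apply_castAdd,
      finSumFinEquiv_symm_apply_natAdd, Sum.map_inl, Sum.map_inr, finSumFinEquiv_apply_left,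
      finSumFinEquiv_apply_right, Fin.addCases_left, Fin.addCases_right]
    split_ifs <;>
      first | rfl | omega | (congr 1; omega) | exact coeff_eq_zero_of_natDegree_lt (by omega)

theorem resultant_associated {R : Type*} [CommRing R] (p q : R[X]) :
    Associated (_root_.resultant p q) (p.resultant q) := by
  have hunit (s : ℤˣ) : IsUnit (s : R) := s.isUnit.map (Int.castRingHom R)
  rw [_root_.resultant, sylvester_eq_submatrix_transpose, det_submatrix_perm, det_transpose,
    ← Polynomial.resultant, resultant_comm, ← mul_assoc]
  exact (associated_unit_mul_right _ _ (((hunit _).mul (hunit _)).mul (isUnit_neg_one.pow _))).symm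

theorem Polynomial.resultant_ne_zero_of_map {R S : Type*} [CommRing R] [CommRing S] [IsDomain S]
    (φ : R →+* S) {p q : R[X]} (hp : φ p.leadingCoeff ≠ 0) (hsplit : (p.map φ).Splits)
    (hroots : ∀ a ∈ (p.map φ).roots, (q.map φ).eval a ≠ 0) : p.resultant q ≠ 0 := by
  intro h
  have hres := resultant_map_map p q p.natDegree q.natDegree φ
  rw [h, map_zero, ← natDegree_map_of_leadingCoeff_ne_zero φ hp,
    resultant_eq_prod_eval _ _ _ natDegree_map_le hsplit, mul_eq_zero] at hres
  rcases hres with hlc | hprod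
  · rw [leadingCoeff_map_of_leadingCoeff_ne_zero φ hp] at hlc
    exact hp (eq_zero_of_pow_eq_zero hlc)
  · obtain ⟨a, ha, hzero⟩ := Multiset.mem_map.1 (Multiset.prod_eq_zero_iff.1 hprod)
    exact hroots a ha hzero

theorem MvPolynomial.exists_aeval_C_X_ne_zero {K : Type*} [CommRing K] [IsDomain K] [Infinite K]
    {a : MvPolynomial (Fin 2) K} (ha : a ≠ 0) :
    ∃ c : K, MvPolynomial.aeval ![Polynomial.C c, Polynomial.X] a ≠ 0 := by
  by_contra! h
  refine ha (MvPolynomial.funext fun x => ?_)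
  have hcomp : (Polynomial.evalRingHom (x 1)).comp
      (MvPolynomial.aeval ![Polynomial.C (x 0), Polynomial.X]).toRingHom = MvPolynomial.eval x := by
    ext i
    · simp
    · fin_cases i <;> simp
  simpa [h] using (RingHom.congr_fun hcomp a).symm

section MatrixPolynomial

variable {r : ℕ} {S : Type*} [CommRing S] [Algebra ℂ S]

theorem map_Pmat (f : (Matrix (Fin r) (Fin r) ℂ)[X]) (v : Fin 2)
    (τ : MvPolynomial (Fin 2) ℂ →ₐ[ℂ] S) :
    (Pmat f v).map τ = (C (τ (MvPolynomial.X v)) • (1 : Matrix (Fin r) (Fin r) S[X]) -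
      (matPolyEquiv.symm f).map (Polynomial.map (algebraMap ℂ S))).det := by
  rw [Pmat, ← coe_mapRingHom, RingHom.map_det]
  congr 1
  ext i j
  obtain rfl | hij := eq_or_ne i j <;> simp [*, Polynomial.map_map]

theorem map_Pmat_eq_map_algebraMap (f : (Matrix (Fin r) (Fin r) ℂ)[X]) (v : Fin 2)
    (ε : MvPolynomial (Fin 2) ℂ →ₐ[ℂ] ℂ) (τ : MvPolynomial (Fin 2) ℂ →ₐ[ℂ] S)
    (h : τ (MvPolynomial.X v) = algebraMap ℂ S (ε (MvPolynomial.X v))) :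
    (Pmat f v).map τ = ((Pmat f v).map ε).map (algebraMap ℂ S) := by
  have hcomp : ((Pmat f v).map ε).map (algebraMap ℂ S) =
      (Pmat f v).map ((Algebra.ofId ℂ S).comp ε) := Polynomial.map_map _ _ _
  rw [hcomp, map_Pmat, map_Pmat, h]
  rfl

theorem eval_map_Pmat (f : (Matrix (Fin r) (Fin r) ℂ)[X]) (v : Fin 2)
    (τ : MvPolynomial (Fin 2) ℂ →ₐ[ℂ] S) (a : ℂ) :
    ((Pmat f v).map τ).eval (algebraMap ℂ S a) =
      aeval (τ (MvPolynomial.X v)) (f.eval (scalar (Fin r) a)).charpoly := by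
  rw [map_Pmat, ← coe_evalRingHom, RingHom.map_det, ← matPolyEquiv_symm_map_eval, Matrix.charpoly,
    ← coe_aeval_eq_eval, AlgHom.map_det]
  congr 1
  ext i j
  obtain rfl | hij := eq_or_ne i j <;> simp [*, aeval_algebraMap_apply_eq_algebraMap_eval]

theorem Pmat_ne_zero (f : (Matrix (Fin r) (Fin r) ℂ)[X]) (v : Fin 2) : Pmat f v ≠ 0 := by
  intro h
  have := eval_map_Pmat f v (MvPolynomial.aeval fun _ => (X : ℂ[X])) 0
  rw [h, Polynomial.map_zero, eval_zero, MvPolynomial.aeval_X, aeval_X_left_apply] at this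
  exact (charpoly_monic _).ne_zero this.symm

theorem eval_map_sub_det (g : (Matrix (Fin r) (Fin r) ℂ)[X]) (τ : MvPolynomial (Fin 2) ℂ →ₐ[ℂ] S)
    (a : ℂ) :
    ((C (MvPolynomial.X 1 : MvPolynomial (Fin 2) ℂ) -
        (matPolyEquiv.symm g).det.map MvPolynomial.C).map τ).eval (algebraMap ℂ S a) =
      τ (MvPolynomial.X 1) - algebraMap ℂ S (g.eval (scalar (Fin r) a)).det := by
  rw [Polynomial.map_sub, map_C, Polynomial.map_map, eval_sub, eval_C, ← MvPolynomial.algebraMap_eq,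
    AlgHom.comp_algebraMap, eval_map_algebraMap, aeval_algebraMap_apply_eq_algebraMap_eval, eval_det,
    AlgEquiv.apply_symm_apply]
  rfl

theorem resultant_Pmat_ne_zero (f : (Matrix (Fin r) (Fin r) ℂ)[X])
    (q : (MvPolynomial (Fin 2) ℂ)[X])
    (hq : ∀ c a : ℂ,
      (q.map (MvPolynomial.aeval ![C c, X] : MvPolynomial (Fin 2) ℂ →ₐ[ℂ] ℂ[X])).eval (C a) ≠ 0) :
    _root_.resultant (Pmat f 0) q ≠ 0 := by
  obtain ⟨c, hc⟩ :=
    MvPolynomial.exists_aeval_C_X_ne_zero (leadingCoeff_ne_zero.2 (Pmat_ne_zero f 0))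
  set σ : MvPolynomial (Fin 2) ℂ →ₐ[ℂ] ℂ[X] := MvPolynomial.aeval ![C c, X]
  set P : ℂ[X] := (Pmat f 0).map (MvPolynomial.aeval (R := ℂ) ![c, 0])
  have hP : (Pmat f 0).map σ = P.map C := map_Pmat_eq_map_algebraMap f 0 _ _ (by simp [σ])
  rw [(resultant_associated _ _).ne_zero_iff]
  refine resultant_ne_zero_of_map (σ : MvPolynomial (Fin 2) ℂ →+* ℂ[X]) hc ?_ ?_
  · rw [hP]
    exact (IsAlgClosed.splits P).map C
  · intro b hb
    rw [hP, (IsAlgClosed.splits P).roots_map] at hb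
    obtain ⟨a, -, rfl⟩ := Multiset.mem_map.1 hb
    exact hq c a

end MatrixPolynomial

theorem statement10_general (r : ℕ)
    (f g : Polynomial (Matrix (Fin r) (Fin r) ℂ)) :
    Rres f g ≠ 0 ∧ Tres f g ≠ 0 := by
  refine ⟨resultant_Pmat_ne_zero f _ fun c a => ?_, resultant_Pmat_ne_zero f _ fun c a => ?_⟩
  · rw [← algebraMap_eq, eval_map_Pmat]
    simpa using (charpoly_monic _).ne_zero
  · rw [← algebraMap_eq, eval_map_sub_det]
    simpa using X_sub_C_ne_zero _

/-- For matrix polynomials `f, g ∈ M_r(ℂ)[Z]` (`r ≥ 1`), the resultants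
`R_{f,g} = Res_x(P_f(x,y₁), P_g(x,y₂))` and `T_{f,g} = Res_x(P_f(x,y₁), y₂ − det(g(xI)))`
are nonzero polynomials in `ℂ[y₁, y₂]`. -/
theorem statement10 (r : ℕ) (hr : 1 ≤ r)
    (f g : Polynomial (Matrix (Fin r) (Fin r) ℂ))
    (hf : 1 ≤ f.natDegree) (hg : 1 ≤ g.natDegree) :
    Rres f g ≠ 0 ∧ Tres f g ≠ 0 :=
  statement10_general r f g
end

section
/- Let F(Z₁, Z₂) = Z₁ − Z₂ − E, where E ∈ M₂(ℂ) is the singular matrix with rows (0, 1) and (0, 0). Then there exist infinitely many pairwise non-similar torsion points (A₁, A₂) ∈ GL₂(ℂ)² with A₁ − A₂ = E; explicitly, for each prime p and each primitive p-th root of unity λ, the pair (diag(λ, 1), [[λ, −1],[0, 1]]) is such a torsion point, and pairs corresponding to distinct primes are not similar. Hence the conclusion of the finiteness result for Z₁ − Z₂ − C with C nonsingular can fail when det C = 0. -/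
open Matrix

/-- Two pairs of `2 × 2` complex matrices are similar (simultaneously conjugate) if they
are conjugate by a single invertible matrix. -/
def PairSimilar (P Q : Matrix (Fin 2) (Fin 2) ℂ × Matrix (Fin 2) (Fin 2) ℂ) : Prop :=
  ∃ V : Matrix (Fin 2) (Fin 2) ℂ, IsUnit V ∧ P.1 = V * Q.1 * V⁻¹ ∧ P.2 = V * Q.2 * V⁻¹

/-- A matrix is torsion if some positive power of it is the identity. -/
def IsTorsionMat (A : Matrix (Fin 2) (Fin 2) ℂ) : Prop :=
  ∃ n : ℕ, 1 ≤ n ∧ A ^ n = 1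

lemma tri_pow (l c : ℂ) (n : ℕ) :
    (!![l, c; 0, 1] : Matrix (Fin 2) (Fin 2) ℂ) ^ n =
      !![l ^ n, c * ∑ i ∈ Finset.range n, l ^ i; 0, 1] := by
  induction n with
  | zero => simp [Matrix.one_fin_two]
  | succ n ih =>
    rw [pow_succ, ih, Matrix.mul_fin_two, Finset.sum_range_succ]
    ext i j; fin_cases i <;> fin_cases j <;> simp <;> ring

lemma trace_eq_of_conj {A B V : Matrix (Fin 2) (Fin 2) ℂ} (hV : IsUnit V)
    (h : A = V * B * V⁻¹) : Matrix.trace A = Matrix.trace B := by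
  rw [h, Matrix.trace_mul_cycle,
    Matrix.nonsing_inv_mul V ((Matrix.isUnit_iff_isUnit_det V).mp hV), one_mul]

/-- For the singular matrix `E = [[0,1],[0,0]]` there are infinitely
many pairwise non-similar torsion points `(A₁, A₂) ∈ GL₂(ℂ)²` with `A₁ − A₂ = E`:
explicitly, for each prime `p` and each primitive `p`-th root of unity `λ`, the pair
`(diag(λ,1), [[λ,−1],[0,1]])` is such a torsion point, pairs for distinct primes are never
similar, and no finite set of pairs exhausts the similarity classes of such torsion
points. -/
theorem statement18 :
    (∀ p : ℕ, p.Prime → ∀ l : ℂ, IsPrimitiveRoot l p →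
      IsTorsionMat !![l, 0; 0, 1] ∧ IsTorsionMat !![l, -1; 0, 1] ∧
        (!![l, 0; 0, 1] : Matrix (Fin 2) (Fin 2) ℂ) - !![l, -1; 0, 1] =
          !![0, 1; 0, 0]) ∧
    (∀ p q : ℕ, p.Prime → q.Prime → p ≠ q →
      ∀ l m : ℂ, IsPrimitiveRoot l p → IsPrimitiveRoot m q →
        ¬PairSimilar (!![l, 0; 0, 1], !![l, -1; 0, 1]) (!![m, 0; 0, 1], !![m, -1; 0, 1])) ∧
    ∀ s : Finset (Matrix (Fin 2) (Fin 2) ℂ × Matrix (Fin 2) (Fin 2) ℂ),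
      ∃ A₁ A₂ : Matrix (Fin 2) (Fin 2) ℂ, IsTorsionMat A₁ ∧ IsTorsionMat A₂ ∧
        A₁ - A₂ = !![0, 1; 0, 0] ∧ ∀ B ∈ s, ¬PairSimilar (A₁, A₂) B := by
  have tors : ∀ p : ℕ, p.Prime → ∀ l : ℂ, IsPrimitiveRoot l p →
      IsTorsionMat !![l, 0; 0, 1] ∧ IsTorsionMat !![l, -1; 0, 1] ∧
        (!![l, 0; 0, 1] : Matrix (Fin 2) (Fin 2) ℂ) - !![l, -1; 0, 1] =
          !![0, 1; 0, 0] := by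
    intro p hp l hl
    refine ⟨⟨p, hp.one_lt.le, ?_⟩, ⟨p, hp.one_lt.le, ?_⟩, ?_⟩
    · rw [tri_pow, hl.pow_eq_one]; simp [Matrix.one_fin_two]
    · rw [tri_pow, hl.pow_eq_one, hl.geom_sum_eq_zero hp.one_lt]
      simp [Matrix.one_fin_two]
    · ext i j; fin_cases i <;> fin_cases j <;> simp
  refine ⟨tors, ?_, ?_⟩
  · rintro p q hp hq hpq l m hl hm ⟨V, hV, h1, -⟩
    have ht := trace_eq_of_conj hV h1
    simp only [Matrix.trace_fin_two_of] at ht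
    have hlm : l = m := add_right_cancel ht
    exact hpq (hl.unique (hlm ▸ hm))
  · intro s
    set T : Finset ℂ := s.image (fun B => Matrix.trace B.1) with hT
    obtain ⟨p, hp, l, hl, hnot⟩ :
        ∃ p : ℕ, p.Prime ∧ ∃ l : ℂ, IsPrimitiveRoot l p ∧ l + 1 ∉ T := by
      by_contra h
      push_neg at h
      set f : ℕ → ℂ := fun n => Complex.exp (2 * (Real.pi : ℂ) * Complex.I / (n : ℂ)) + 1
        with hf
      have hinj : Set.InjOn f {p : ℕ | p.Prime} := by
        intro a ha b hb hab
        have hab' : Complex.exp (2 * (Real.pi : ℂ) * Complex.I / (a : ℂ)) =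
            Complex.exp (2 * (Real.pi : ℂ) * Complex.I / (b : ℂ)) := by
          have := hab; simpa [hf] using this
        exact (Complex.isPrimitiveRoot_exp a ha.ne_zero).unique
          (hab' ▸ Complex.isPrimitiveRoot_exp b hb.ne_zero)
      have himg : f '' {p : ℕ | p.Prime} ⊆ (T : Set ℂ) := by
        rintro x ⟨a, ha, rfl⟩
        exact h a ha _ (Complex.isPrimitiveRoot_exp a ha.ne_zero)
      exact (Nat.infinite_setOf_prime.image hinj) (T.finite_toSet.subset himg)
    obtain ⟨t1, t2, t3⟩ := tors p hp l hl
    refine ⟨_, _, t1, t2, t3, ?_⟩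
    rintro B hB ⟨V, hV, h1, -⟩
    have ht := trace_eq_of_conj hV h1
    apply hnot
    have hmem : Matrix.trace B.1 ∈ T := Finset.mem_image_of_mem _ hB
    have : Matrix.trace (!![l, 0; 0, 1] : Matrix (Fin 2) (Fin 2) ℂ) = l + 1 := by
      simp [Matrix.trace_fin_two_of]
    rw [← this, ht]
    exact hmem
end

section
/- Let d, e ≥ 1, let a₁, a₃, b₁, b₃ ∈ ℂ* be multiplicatively independent (no nontrivial multiplicative relation a₁^{k₁} a₃^{k₂} b₁^{k₃} b₃^{k₄} = 1 with integers k_i not all zero), and define f(Z) = Z^d + [[a₁, 0],[a₂, a₃]] and g(Z) = Z^e + [[b₁, b₂],[0, b₃]] for any a₂, b₂ ∈ ℂ. Then the eigenvalues of f(xI) are x^d + a₁ and x^d + a₃, the eigenvalues of g(xI) are x^e + b₁ and x^e + b₃, and f and g are spectrally multiplicatively independent. -/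
open Polynomial Matrix

/-- Membership in the spectral set `𝒮_f = {det(f(xI)), μ₁(x), μ₂(x)}` attached to a
matrix polynomial `f ∈ M₂(ℂ)[Z]`: `α` is either `det(f(xI))` or an eigenvalue of `f(xI)`
in the algebraic closure of `ℂ(x)`. -/
noncomputable def memSpectralSet (f : Polynomial (Matrix (Fin 2) (Fin 2) ℂ))
    (α : AlgebraicClosure (RatFunc ℂ)) : Prop :=
  α = toClosure (matPolyEquiv.symm f).det ∨
    (α • (1 : Matrix (Fin 2) (Fin 2) (AlgebraicClosure (RatFunc ℂ))) -
      (matPolyEquiv.symm f).map toClosure).det = 0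

lemma toClosure_inj : Function.Injective toClosure :=
  (algebraMap (RatFunc ℂ) (AlgebraicClosure (RatFunc ℂ))).injective.comp
    (IsFractionRing.injective (Polynomial ℂ) (RatFunc ℂ))

lemma symm_eq' (n : ℕ) (c₁ c₂ c₃ c₄ : ℂ) :
    matPolyEquiv.symm (Polynomial.X ^ n + Polynomial.C !![c₁, c₂; c₃, c₄]) =
      !![X ^ n + C c₁, C c₂; C c₃, X ^ n + C c₄] := by
  apply matPolyEquiv.injective
  rw [AlgEquiv.apply_symm_apply]
  have h : (!![X ^ n + C c₁, C c₂; C c₃, X ^ n + C c₄] : Matrix (Fin 2) (Fin 2) ℂ[X]) =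
      (X ^ n : ℂ[X]) • (1 : Matrix (Fin 2) (Fin 2) ℂ[X]) + (!![c₁, c₂; c₃, c₄]).map C := by
    ext i j
    fin_cases i <;> fin_cases j <;>
      simp [Matrix.smul_apply, Matrix.one_apply, Matrix.map_apply, smul_eq_mul]
  rw [h, map_add, matPolyEquiv_smul_one, matPolyEquiv_map_C, Polynomial.map_pow, map_X]

lemma det_eq' (n : ℕ) (c₁ c₂ c₃ c₄ : ℂ) (h23 : c₂ * c₃ = 0) :
    (!![X ^ n + C c₁, C c₂; C c₃, X ^ n + C c₄] : Matrix (Fin 2) (Fin 2) ℂ[X]).det =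
      (X ^ n + C c₁) * (X ^ n + C c₄) := by
  rw [Matrix.det_fin_two_of, ← C_mul, h23, map_zero, sub_zero]

lemma eigen_det' (n : ℕ) (c₁ c₂ c₃ c₄ : ℂ) (h23 : c₂ * c₃ = 0)
    (μ : AlgebraicClosure (RatFunc ℂ)) :
    (μ • (1 : Matrix (Fin 2) (Fin 2) (AlgebraicClosure (RatFunc ℂ))) -
      (!![X ^ n + C c₁, C c₂; C c₃, X ^ n + C c₄] : Matrix (Fin 2) (Fin 2) ℂ[X]).map
        toClosure).det =
      (μ - toClosure (X ^ n + C c₁)) * (μ - toClosure (X ^ n + C c₄)) := by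
  rw [Matrix.det_fin_two]
  simp [Matrix.sub_apply, Matrix.smul_apply, Matrix.one_apply, Matrix.map_apply]
  rcases mul_eq_zero.mp h23 with h | h <;> simp [h]

lemma eigen_iff' (n : ℕ) (c₁ c₂ c₃ c₄ : ℂ) (h23 : c₂ * c₃ = 0)
    (μ : AlgebraicClosure (RatFunc ℂ)) :
    (μ • (1 : Matrix (Fin 2) (Fin 2) (AlgebraicClosure (RatFunc ℂ))) -
      (!![X ^ n + C c₁, C c₂; C c₃, X ^ n + C c₄] : Matrix (Fin 2) (Fin 2) ℂ[X]).map
        toClosure).det = 0 ↔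
      μ = toClosure (X ^ n + C c₁) ∨ μ = toClosure (X ^ n + C c₄) := by
  rw [eigen_det' n c₁ c₂ c₃ c₄ h23, mul_eq_zero, sub_eq_zero, sub_eq_zero]

lemma eval_zero_pow_add (n : ℕ) (hn : 1 ≤ n) (c : ℂ) :
    (X ^ n + C c : ℂ[X]).eval 0 = c := by
  simp [zero_pow (by omega : n ≠ 0)]

lemma spec_cases (n : ℕ) (hn : 1 ≤ n) (c₁ c₂ c₃ c₄ : ℂ)
    (h23 : c₂ * c₃ = 0) (α : AlgebraicClosure (RatFunc ℂ))
    (hα : memSpectralSet (Polynomial.X ^ n + Polynomial.C !![c₁, c₂; c₃, c₄]) α) :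
    ∃ (p : ℂ[X]) (ε₁ ε₂ : ℤ), (ε₁ ≠ 0 ∨ ε₂ ≠ 0) ∧ α = toClosure p ∧
      p.eval 0 = c₁ ^ ε₁ * c₄ ^ ε₂ := by
  unfold memSpectralSet at hα
  rw [symm_eq' n c₁ c₂ c₃ c₄, det_eq' n c₁ c₂ c₃ c₄ h23,
    eigen_iff' n c₁ c₂ c₃ c₄ h23] at hα
  rcases hα with h | h | h
  · exact ⟨(X ^ n + C c₁) * (X ^ n + C c₄), 1, 1, Or.inl one_ne_zero, h, by
      simp [eval_mul, eval_zero_pow_add n hn]⟩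
  · exact ⟨X ^ n + C c₁, 1, 0, Or.inl one_ne_zero, h, by
      simp [eval_zero_pow_add n hn]⟩
  · exact ⟨X ^ n + C c₄, 0, 1, Or.inr one_ne_zero, h, by
      simp [eval_zero_pow_add n hn]⟩

lemma key_transfer (A B : ℂ) (p q : Polynomial ℂ) (hA : p.eval 0 = A) (hB : q.eval 0 = B)
    (hA0 : A ≠ 0) (hB0 : B ≠ 0) (k l : ℤ)
    (h : toClosure p ^ k * toClosure q ^ l = 1) : A ^ k * B ^ l = 1 := by
  have hp : p ≠ 0 := fun hp => hA0 (by rw [← hA, hp, eval_zero])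
  have hq : q ≠ 0 := fun hq => hB0 (by rw [← hB, hq, eval_zero])
  have hP : toClosure p ≠ 0 := fun h0 => hp (toClosure_inj (by rw [h0, map_zero]))
  have hQ : toClosure q ≠ 0 := fun h0 => hq (toClosure_inj (by rw [h0, map_zero]))
  have e1 : (k.toNat : ℤ) = k + ((-k).toNat : ℤ) := by omega
  have e2 : (l.toNat : ℤ) = l + ((-l).toNat : ℤ) := by omega
  have h2 : toClosure p ^ (k.toNat : ℤ) * toClosure q ^ (l.toNat : ℤ) =
      toClosure p ^ ((-k).toNat : ℤ) * toClosure q ^ ((-l).toNat : ℤ) := by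
    rw [e1, e2, zpow_add₀ hP, zpow_add₀ hQ, mul_mul_mul_comm, h, one_mul]
  simp only [zpow_natCast, ← map_pow, ← _root_.map_mul] at h2
  have h3 := congrArg (Polynomial.eval 0) (toClosure_inj h2)
  simp only [eval_mul, eval_pow, hA, hB] at h3
  have h4 : A ^ (k.toNat : ℤ) * B ^ (l.toNat : ℤ) =
      A ^ ((-k).toNat : ℤ) * B ^ ((-l).toNat : ℤ) := by
    simpa only [zpow_natCast] using h3
  rw [e1, e2, zpow_add₀ hA0, zpow_add₀ hB0, mul_mul_mul_comm] at h4
  have hR : A ^ ((-k).toNat : ℤ) * B ^ ((-l).toNat : ℤ) ≠ 0 :=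
    mul_ne_zero (zpow_ne_zero _ hA0) (zpow_ne_zero _ hB0)
  exact mul_right_cancel₀ hR (by rw [h4, one_mul])

/-- Let `d, e ≥ 1`, let `a₁, a₃, b₁, b₃ ∈ ℂ*` be multiplicatively
independent, and set `f(Z) = Z^d + [[a₁,0],[a₂,a₃]]`, `g(Z) = Z^e + [[b₁,b₂],[0,b₃]]`.
Then the eigenvalues of `f(xI)` are `x^d + a₁` and `x^d + a₃`, the eigenvalues of `g(xI)`
are `x^e + b₁` and `x^e + b₃`, and `f` and `g` are spectrally multiplicatively
independent. -/
theorem statement19 (d e : ℕ) (hd : 1 ≤ d) (he : 1 ≤ e)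
    (a₁ a₂ a₃ b₁ b₂ b₃ : ℂ) (ha₁ : a₁ ≠ 0) (ha₃ : a₃ ≠ 0) (hb₁ : b₁ ≠ 0) (hb₃ : b₃ ≠ 0)
    (hindep : ∀ k₁ k₂ k₃ k₄ : ℤ, a₁ ^ k₁ * a₃ ^ k₂ * b₁ ^ k₃ * b₃ ^ k₄ = 1 →
      k₁ = 0 ∧ k₂ = 0 ∧ k₃ = 0 ∧ k₄ = 0)
    (f g : Polynomial (Matrix (Fin 2) (Fin 2) ℂ))
    (hfdef : f = Polynomial.X ^ d + Polynomial.C !![a₁, 0; a₂, a₃])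
    (hgdef : g = Polynomial.X ^ e + Polynomial.C !![b₁, b₂; 0, b₃]) :
    (∀ μ : AlgebraicClosure (RatFunc ℂ),
      (μ • (1 : Matrix (Fin 2) (Fin 2) (AlgebraicClosure (RatFunc ℂ))) -
          (matPolyEquiv.symm f).map toClosure).det = 0 ↔
        μ = toClosure (Polynomial.X ^ d + Polynomial.C a₁) ∨
        μ = toClosure (Polynomial.X ^ d + Polynomial.C a₃)) ∧
    (∀ η : AlgebraicClosure (RatFunc ℂ),
      (η • (1 : Matrix (Fin 2) (Fin 2) (AlgebraicClosure (RatFunc ℂ))) -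
          (matPolyEquiv.symm g).map toClosure).det = 0 ↔
        η = toClosure (Polynomial.X ^ e + Polynomial.C b₁) ∨
        η = toClosure (Polynomial.X ^ e + Polynomial.C b₃)) ∧
    (∀ α β : AlgebraicClosure (RatFunc ℂ),
      memSpectralSet f α → memSpectralSet g β →
      ∀ k l : ℤ, (k, l) ≠ (0, 0) → α ^ k * β ^ l ≠ 1) := by
  subst hfdef hgdef
  have h23f : (0 : ℂ) * a₂ = 0 := zero_mul a₂
  have h23g : b₂ * (0 : ℂ) = 0 := mul_zero b₂
  refine ⟨?_, ?_, ?_⟩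
  · intro μ
    rw [symm_eq' d a₁ 0 a₂ a₃]
    exact eigen_iff' d a₁ 0 a₂ a₃ h23f μ
  · intro η
    rw [symm_eq' e b₁ b₂ 0 b₃]
    exact eigen_iff' e b₁ b₂ 0 b₃ h23g η
  · intro α β hα hβ k l hkl hrel
    obtain ⟨p, ε₁, ε₂, hε, hαp, hevp⟩ := spec_cases d hd a₁ 0 a₂ a₃ h23f α hα
    obtain ⟨q, δ₁, δ₂, hδ, hβq, hevq⟩ := spec_cases e he b₁ b₂ 0 b₃ h23g β hβ
    have hA0 : a₁ ^ ε₁ * a₃ ^ ε₂ ≠ 0 :=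
      mul_ne_zero (zpow_ne_zero _ ha₁) (zpow_ne_zero _ ha₃)
    have hB0 : b₁ ^ δ₁ * b₃ ^ δ₂ ≠ 0 :=
      mul_ne_zero (zpow_ne_zero _ hb₁) (zpow_ne_zero _ hb₃)
    have hAB : (a₁ ^ ε₁ * a₃ ^ ε₂) ^ k * (b₁ ^ δ₁ * b₃ ^ δ₂) ^ l = 1 := by
      apply key_transfer _ _ p q hevp hevq hA0 hB0
      rw [← hαp, ← hβq]; exact hrel
    have expand : a₁ ^ (ε₁ * k) * a₃ ^ (ε₂ * k) * b₁ ^ (δ₁ * l) * b₃ ^ (δ₂ * l) = 1 := by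
      rw [← hAB, mul_zpow, mul_zpow, ← _root_.zpow_mul, ← _root_.zpow_mul,
        ← _root_.zpow_mul, ← _root_.zpow_mul]
      ring
    obtain ⟨h1, h2, h3, h4⟩ := hindep _ _ _ _ expand
    have hk0 : k = 0 := by
      rcases hε with hε | hε
      · rcases mul_eq_zero.mp h1 with h | h
        · exact absurd h hε
        · exact h
      · rcases mul_eq_zero.mp h2 with h | h
        · exact absurd h hε
        · exact h
    have hl0 : l = 0 := by
      rcases hδ with hδ | hδ
      · rcases mul_eq_zero.mp h3 with h | h
        · exact absurd h hδ
        · exact h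
      · rcases mul_eq_zero.mp h4 with h | h
        · exact absurd h hδ
        · exact h
    exact hkl (by rw [hk0, hl0])
end
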